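/- arXiv:2305.03645 — 9 statements merged into one kernel-verified Lean document; each statement's English description precedes it below -/
import Mathlib

section
/- A binary choice probability ρ on A has a binary value representation if and only if it is transitive. -/
/-- A binary choice probability on `A`. -/
def IsBCP {A : Type*} (ρ : A → A → ℝ) : Prop :=
  (∀ i j : A, 0 ≤ ρ i j ∧ ρ i j ≤ 1) ∧
  (∀ i j : A, i ≠ j → (ρ i j = 1 ↔ ρ j i = 0)) ∧
  (∃ ε : ℝ, 0 < ε ∧ ∀ i : A, ρ i i = ε)

/-- Transitivity of a binary choice probability. -/
def BCPTransitive {A : Type*} (ρ : A → A → ℝ) : Prop :=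
  ∀ i j k : A, i ≠ j → j ≠ k → i ≠ k →
    ρ j i * ρ k j * ρ i k = ρ k i * ρ j k * ρ i j

/-- A binary value representation of a binary choice probability: a Paretian utility `w`,
a Fechnerian utility `v` and a symmetric, strictly positive status quo bias index `s`. -/
def HasBVR {A : Type*} (ρ : A → A → ℝ) : Prop :=
  ∃ (v w : A → ℝ) (s : A → A → ℝ),
    (∀ i j : A, 0 < s i j) ∧ (∀ i j : A, s i j = s j i) ∧
    ∀ i j : A,
      (w j < w i → ρ i j = 1) ∧
      (w i = w j →
        ρ i j = s i j * (Real.exp (v i) / (Real.exp (v i) + Real.exp (v j)))) ∧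
      (w i < w j → ρ i j = 0)

/-! Write `i ≿ j` when `ρ(i|j) > 0`. Transitivity of `ρ` makes `≿` a total preorder and
makes the odds `ρ(i|j) / ρ(j|i)` form a multiplicative cocycle on each indifference
class. On a finite set the preorder is represented by a utility `w` (count the alternatives
strictly below), and the cocycle is `e^{v(i) - v(j)}` with `v(i)` the log-odds of `i` against a
fixed representative of its class; `s` is then forced, and it is symmetric by the cocycle
identity. Conversely, in a binary value representation both sides of the transitivity identity
vanish unless `w` is constant on the triple, and in that case they agree because `s` is
symmetric. -/

open Real

theorem exists_utility_of_total_of_trans {α : Type*} [Finite α] (r : α → α → Prop)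
    (total : ∀ a b, r a b ∨ r b a) (trans : ∀ a b c, r a b → r b c → r a c) :
    ∃ u : α → ℝ, ∀ a b, r a b ↔ u b ≤ u a := by
  classical
  have := Fintype.ofFinite α
  let below (a : α) : Finset α := {c | ¬ r c a}
  have below_mono {a b : α} (hab : r a b) : below b ⊆ below a := fun c hc ↦ by
    simp only [below, Finset.mem_filter, Finset.mem_univ, true_and] at hc ⊢
    exact fun hca ↦ hc (trans c a b hca hab)
  refine ⟨fun a ↦ (below a).card, fun a b ↦ ⟨fun hab ↦ ?_, fun hle ↦ ?_⟩⟩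
  · exact Nat.cast_le.mpr (Finset.card_le_card (below_mono hab))
  · by_contra hab
    have hba : r b a := (total a b).resolve_left hab
    have hlt : below a ⊂ below b := by
      refine Finset.ssubset_iff_of_subset (below_mono hba) |>.mpr ⟨a, ?_, ?_⟩ <;>
        simp [below, hab, (total a a).elim id id]
    exact (Finset.card_lt_card hlt).not_ge (Nat.cast_le.mp hle)

section

variable {A : Type*} {ρ : A → A → ℝ}

theorem HasBVR.cycle_balanced (h : HasBVR ρ) (i j k : A) :
    ρ j i * ρ k j * ρ i k = ρ k i * ρ j k * ρ i j := by
  obtain ⟨v, w, s, -, hs, hrep⟩ := h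
  -- a permutation of `i j k` at most swaps the two sides of the identity
  wlog hik : w i ≤ w k generalizing i j k
  · linear_combination -this k j i (by linarith)
  wlog hjk : w j ≤ w k generalizing i j k
  · linear_combination -this i k j (by linarith) (by linarith)
  wlog hij : w i ≤ w j generalizing i j k
  · linear_combination -this j i k hjk hik (by linarith)
  rcases hij.lt_or_eq with hij | hij
  · rw [(hrep i k).2.2 (hij.trans_le hjk), (hrep i j).2.2 hij]
    ring
  rcases hjk.lt_or_eq with hjk | hjk
  · rw [(hrep i k).2.2 (hij ▸ hjk), (hrep j k).2.2 hjk]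
    ring
  rw [(hrep j i).2.1 hij.symm, (hrep k j).2.1 hjk.symm, (hrep i k).2.1 (hij.trans hjk),
    (hrep k i).2.1 (hij.trans hjk).symm, (hrep j k).2.1 hjk, (hrep i j).2.1 hij,
    hs j i, hs k j, hs i k]
  ring

theorem BCPTransitive.cycle_balanced (h : BCPTransitive ρ) (i j k : A) :
    ρ j i * ρ k j * ρ i k = ρ k i * ρ j k * ρ i j := by
  by_cases hij : i = j
  · subst hij; ring
  by_cases hjk : j = k
  · subst hjk; ring
  by_cases hik : i = k
  · subst hik; ring
  exact h i j k hij hjk hik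

namespace IsBCP

theorem nonneg (hρ : IsBCP ρ) (i j : A) : 0 ≤ ρ i j := (hρ.1 i j).1

theorem diag_pos (hρ : IsBCP ρ) (i : A) : 0 < ρ i i := by
  obtain ⟨ε, hε, hdiag⟩ := hρ.2.2
  exact hdiag i ▸ hε

theorem eq_one_of_eq_zero (hρ : IsBCP ρ) {i j : A} (h : ρ j i = 0) : ρ i j = 1 := by
  have hij : i ≠ j := by
    rintro rfl
    exact (hρ.diag_pos i).ne' h
  exact (hρ.2.1 i j hij).2 h

theorem pos_or_pos (hρ : IsBCP ρ) (i j : A) : 0 < ρ i j ∨ 0 < ρ j i := by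
  by_contra! h
  have hij : ρ i j = 0 := le_antisymm h.1 (hρ.nonneg i j)
  have hji : ρ j i = 0 := le_antisymm h.2 (hρ.nonneg j i)
  simp [hρ.eq_one_of_eq_zero hji] at hij

theorem pos_trans (hρ : IsBCP ρ) (ht : BCPTransitive ρ) {i j k : A}
    (hij : 0 < ρ i j) (hjk : 0 < ρ j k) : 0 < ρ i k := by
  by_contra! hik
  have hik : ρ i k = 0 := le_antisymm hik (hρ.nonneg i k)
  have hcycle := ht.cycle_balanced i j k
  rw [hik, hρ.eq_one_of_eq_zero hik, mul_zero, one_mul] at hcycle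
  exact (mul_pos hjk hij).ne' hcycle.symm

def indifference (hρ : IsBCP ρ) (ht : BCPTransitive ρ) : Setoid A where
  r i j := 0 < ρ i j ∧ 0 < ρ j i
  iseqv :=
    { refl := fun i ↦ ⟨hρ.diag_pos i, hρ.diag_pos i⟩
      symm := And.symm
      trans := fun hij hjk ↦ ⟨hρ.pos_trans ht hij.1 hjk.1, hρ.pos_trans ht hjk.2 hij.2⟩ }

theorem exists_odds_potential (hρ : IsBCP ρ) (ht : BCPTransitive ρ) :
    ∃ v : A → ℝ, ∀ i j, 0 < ρ i j → 0 < ρ j i → ρ i j * exp (v j) = ρ j i * exp (v i) := by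
  let S := hρ.indifference ht
  obtain ⟨rep, rep_eq, rep_rel⟩ : ∃ rep : A → A, (∀ i j, S i j → rep j = rep i) ∧ ∀ i, S (rep i) i :=
    ⟨fun i ↦ (Quotient.mk S i).out, fun _ _ hij ↦ congrArg Quotient.out (Quotient.sound hij).symm,
      Quotient.mk_out⟩
  refine ⟨fun i ↦ log (ρ i (rep i) / ρ (rep i) i), fun i j hij hji ↦ ?_⟩
  dsimp only
  obtain ⟨hri, hir⟩ := rep_rel i
  obtain ⟨hrj, hjr⟩ := rep_rel j
  rw [rep_eq i j ⟨hij, hji⟩] at hrj hjr ⊢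
  rw [exp_log (div_pos hir hri), exp_log (div_pos hjr hrj)]
  field_simp
  linear_combination -ht.cycle_balanced i j (rep i)

theorem hasBVR_of_transitive [Finite A] (hρ : IsBCP ρ) (ht : BCPTransitive ρ) : HasBVR ρ := by
  obtain ⟨w, hw⟩ := exists_utility_of_total_of_trans (fun i j ↦ 0 < ρ i j) hρ.pos_or_pos
    fun _ _ _ ↦ hρ.pos_trans ht
  obtain ⟨v, hv⟩ := hρ.exists_odds_potential ht
  have eq_zero_of_lt {i j : A} (h : w i < w j) : ρ i j = 0 :=
    le_antisymm (not_lt.mp fun hij ↦ h.not_ge ((hw i j).mp hij)) (hρ.nonneg i j)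
  refine ⟨v, w, fun i j ↦ if w i = w j then ρ i j * (exp (v i) + exp (v j)) / exp (v i) else 1,
    fun i j ↦ ?_, fun i j ↦ ?_, fun i j ↦ ⟨fun h ↦ hρ.eq_one_of_eq_zero (eq_zero_of_lt h),
      fun h ↦ ?_, eq_zero_of_lt⟩⟩ <;> dsimp only
  · split_ifs with h
    · have := (hw i j).mpr h.ge
      positivity
    · exact one_pos
  · by_cases h : w i = w j
    · rw [if_pos h, if_pos h.symm]
      have hij := hv i j ((hw i j).mpr h.ge) ((hw j i).mpr h.le)
      field_simp
      linear_combination (exp (v i) + exp (v j)) * hij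
    · rw [if_neg h, if_neg (Ne.symm h)]
  · rw [if_pos h]
    field_simp

end IsBCP

end

theorem bcp_value_representation_iff_transitive_general
    {A : Type*} [Fintype A]
    (ρ : A → A → ℝ) (hρ : IsBCP ρ) :
    HasBVR ρ ↔ BCPTransitive ρ :=
  ⟨fun h i j k _ _ _ ↦ h.cycle_balanced i j k, hρ.hasBVR_of_transitive⟩

/-- Theorem 1: a binary choice probability has a binary value representation
if and only if it is transitive. -/
theorem bcp_value_representation_iff_transitive
    {A : Type*} [Fintype A] (hcard : 3 ≤ Fintype.card A)
    (ρ : A → A → ℝ) (hρ : IsBCP ρ) :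
    HasBVR ρ ↔ BCPTransitive ρ :=
  bcp_value_representation_iff_transitive_general ρ hρ
end

section
/- Suppose a binary choice probability ρ on A has a binary value representation with elements (s, v, w). Then: (i) on each level set of w, the function v is unique up to an additive constant, i.e., if (s', v', w) is another representation with the same w, then for any two alternatives i,j with w(i)=w(j) one has v'(i)−v'(j) = v(i)−v(j); (ii) for all i,j with w(i)=w(j), s(i,j) = ρ(i|j)+ρ(j|i), so s is uniquely determined on each level set of w; moreover ρ(i|j) < 1−ρ(j|i) ⇔ s(i,j) < 1, ρ(i|j) = 1−ρ(j|i) ⇔ s(i,j) = 1, and ρ(i|j) > 1−ρ(j|i) ⇔ s(i,j) > 1. -/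
/-- `(s, v, w)` is a binary value representation of `ρ`. -/
def IsBVRep {A : Type*} (ρ : A → A → ℝ) (s : A → A → ℝ) (v w : A → ℝ) : Prop :=
  (∀ i j : A, 0 < s i j) ∧ (∀ i j : A, s i j = s j i) ∧
  ∀ i j : A,
    (w j < w i → ρ i j = 1) ∧
    (w i = w j →
      ρ i j = s i j * (Real.exp (v i) / (Real.exp (v i) + Real.exp (v j)))) ∧
    (w i < w j → ρ i j = 0)

open Real

namespace IsBVRep

variable {A : Type*} {ρ s : A → A → ℝ} {v w : A → ℝ}

theorem rho_eq (hrep : IsBVRep ρ s v w) {i j : A} (hw : w i = w j) :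
    ρ i j = s i j * (exp (v i) / (exp (v i) + exp (v j))) :=
  (hrep.2.2 i j).2.1 hw

theorem s_eq_rho_add_rho (hrep : IsBVRep ρ s v w) {i j : A} (hw : w i = w j) :
    s i j = ρ i j + ρ j i := by
  rw [hrep.rho_eq hw, hrep.rho_eq hw.symm, hrep.2.1 j i]
  field_simp
  ring

theorem sub_eq_log_div (hrep : IsBVRep ρ s v w) {i j : A} (hw : w i = w j) :
    v i - v j = log (ρ i j / ρ j i) := by
  have hs := hrep.1 i j
  rw [hrep.rho_eq hw, hrep.rho_eq hw.symm, hrep.2.1 j i, ← exp_eq_exp, exp_log (by positivity),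
    exp_sub]
  field_simp
  ring

end IsBVRep

theorem bvr_uniqueness_general
    {A : Type*}
    (ρ : A → A → ℝ)
    (s : A → A → ℝ) (v w : A → ℝ) (hrep : IsBVRep ρ s v w) :
    (∀ (s' : A → A → ℝ) (v' : A → ℝ), IsBVRep ρ s' v' w →
      ∀ i j : A, w i = w j → v' i - v' j = v i - v j) ∧
    (∀ i j : A, w i = w j →
      s i j = ρ i j + ρ j i ∧
      (ρ i j < 1 - ρ j i ↔ s i j < 1) ∧
      (ρ i j = 1 - ρ j i ↔ s i j = 1) ∧
      (1 - ρ j i < ρ i j ↔ 1 < s i j)) := by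
  refine ⟨fun s' v' hrep' i j hw => ?_, fun i j hw => ?_⟩
  · rw [hrep'.sub_eq_log_div hw, hrep.sub_eq_log_div hw]
  · have hs := hrep.s_eq_rho_add_rho hw
    refine ⟨hs, ?_, ?_, ?_⟩ <;> constructor <;> intro h <;> linarith

/-- Lemma 2 (uniqueness properties of a binary value representation): on each level
set of `w` the Fechnerian utility `v` is unique up to an additive constant, and the
status quo bias index `s` is uniquely determined there, with `s` detecting the
direction of the status quo bias. -/
theorem bvr_uniqueness
    {A : Type*} [Fintype A] (hcard : 3 ≤ Fintype.card A)
    (ρ : A → A → ℝ) (hρ : IsBCP ρ)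
    (s : A → A → ℝ) (v w : A → ℝ) (hrep : IsBVRep ρ s v w) :
    (∀ (s' : A → A → ℝ) (v' : A → ℝ), IsBVRep ρ s' v' w →
      ∀ i j : A, w i = w j → v' i - v' j = v i - v j) ∧
    (∀ i j : A, w i = w j →
      s i j = ρ i j + ρ j i ∧
      (ρ i j < 1 - ρ j i ↔ s i j < 1) ∧
      (ρ i j = 1 - ρ j i ↔ s i j = 1) ∧
      (1 - ρ j i < ρ i j ↔ 1 < s i j)) :=
  bvr_uniqueness_general ρ s v w hrep
end

section
/- Suppose a binary choice probability ρ on A has a binary value representation with elements (s, v, w). Then for all i,j ∈ A: ρ(i|j) ≥ ρ(j|i) if and only if the pair (w(i), v(i)) is greater than or equal to (w(j), v(j)) in the lexicographic order on ℝ². -/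
lemma Real.exp_div_exp_add_exp_le_iff {a b : ℝ} :
    Real.exp b / (Real.exp b + Real.exp a) ≤ Real.exp a / (Real.exp a + Real.exp b) ↔ b ≤ a := by
  rw [add_comm (Real.exp b), div_le_div_iff_of_pos_right (by positivity), Real.exp_le_exp]

namespace IsBVRep

variable {A : Type*} {ρ s : A → A → ℝ} {v w : A → ℝ}

lemma apply_eq_one_of_lt (h : IsBVRep ρ s v w) {i j : A} (hij : w j < w i) : ρ i j = 1 :=
  (h.2.2 i j).1 hij

lemma apply_eq_zero_of_lt (h : IsBVRep ρ s v w) {i j : A} (hij : w i < w j) : ρ i j = 0 :=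
  (h.2.2 i j).2.2 hij

lemma apply_le_apply_iff_of_eq (h : IsBVRep ρ s v w) {i j : A} (hij : w i = w j) :
    ρ j i ≤ ρ i j ↔ v j ≤ v i := by
  obtain ⟨hs, hsymm, hρ⟩ := h
  rw [(hρ i j).2.1 hij, (hρ j i).2.1 hij.symm, hsymm j i, mul_le_mul_iff_right₀ (hs i j),
    Real.exp_div_exp_add_exp_le_iff]

theorem apply_le_apply_iff (h : IsBVRep ρ s v w) {i j : A} :
    ρ j i ≤ ρ i j ↔ w j < w i ∨ (w i = w j ∧ v j ≤ v i) := by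
  rcases lt_trichotomy (w i) (w j) with hlt | heq | hgt
  · simp [h.apply_eq_zero_of_lt hlt, h.apply_eq_one_of_lt hlt, hlt.ne, hlt.not_gt]
  · simp only [h.apply_le_apply_iff_of_eq heq, heq, lt_irrefl, true_and, false_or]
  · simp [h.apply_eq_one_of_lt hgt, h.apply_eq_zero_of_lt hgt, hgt]

end IsBVRep

theorem bcp_lexicographic_representation_general
    {A : Type*}
    (ρ : A → A → ℝ)
    (s : A → A → ℝ) (v w : A → ℝ) (hrep : IsBVRep ρ s v w) :
    ∀ i j : A, ρ j i ≤ ρ i j ↔ (w j < w i ∨ (w i = w j ∧ v j ≤ v i)) :=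
  fun _ _ => hrep.apply_le_apply_iff

/-- The weak preference `≿` induced by a binary choice probability with a binary value
representation `(s, v, w)` is represented lexicographically by the pair `(w, v)`:
`ρ(i∣j) ≥ ρ(j∣i)` iff `(w i, v i) ≥_lex (w j, v j)`. -/
theorem bcp_lexicographic_representation
    {A : Type*} [Fintype A] (hcard : 3 ≤ Fintype.card A)
    (ρ : A → A → ℝ) (hρ : IsBCP ρ)
    (s : A → A → ℝ) (v w : A → ℝ) (hrep : IsBVRep ρ s v w) :
    ∀ i j : A, ρ j i ≤ ρ i j ↔ (w j < w i ∨ (w i = w j ∧ v j ≤ v i)) :=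
  bcp_lexicographic_representation_general ρ s v w hrep
end

section
/- Let λ, β > 0 and Λ ∈ ℝ with Λ ≠ 0, and define ρ⁺ = (1 − e^{βΛ})/(e^{−λΛ} − e^{βΛ}) and ρ⁻ = (1 − e^{−βΛ})/(e^{λΛ} − e^{−βΛ}). Then λΛ = ln(ρ⁺/ρ⁻) and βΛ = ln((1 − ρ⁻)/(1 − ρ⁺)). -/
/-!
Write `x = e^{λΛ}` and `y = e^{βΛ}`. Clearing `x⁻¹` gives `ρ⁺ = x (1 - y) / (1 - x y)` and
`ρ⁻ = (1 - y) / (1 - x y)`, so `ρ⁺ / ρ⁻ = x`. Moreover `1 - ρ⁺` is `ρ⁻` with the two barriers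
exchanged (rejecting means hitting the other barrier), so `(1 - ρ⁻) / (1 - ρ⁺)` is `ρ⁺ / ρ⁻` with
`λ` and `β` exchanged, namely `y`.
-/

namespace DDM

variable {K : Type*} [Field K]

/-- With `x = e^{λΛ}` and `y = e^{βΛ}`, `ρ⁺ = acceptProb x y` and `ρ⁻ = acceptProb x⁻¹ y⁻¹`. -/
def acceptProb (x y : K) : K := (1 - y) / (x⁻¹ - y)

theorem acceptProb_eq {x : K} (hx : x ≠ 0) (y : K) :
    acceptProb x y = x * (1 - y) / (1 - x * y) := by
  rw [acceptProb, ← mul_div_mul_left _ _ hx, mul_sub x x⁻¹, mul_inv_cancel₀ hx]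

theorem one_sub_acceptProb {x y : K} (hx : x ≠ 0) (hy : y ≠ 0) (hxy : x * y ≠ 1) :
    1 - acceptProb x y = acceptProb y⁻¹ x⁻¹ := by
  have hxy' : 1 - x * y ≠ 0 := sub_ne_zero.mpr (Ne.symm hxy)
  rw [acceptProb_eq hx, acceptProb_eq (inv_ne_zero hy)]
  field_simp
  ring

theorem acceptProb_div_acceptProb_inv {x y : K} (hx : x ≠ 0) (hy : y ≠ 0) (hy1 : y ≠ 1)
    (hxy : x * y ≠ 1) : acceptProb x y / acceptProb x⁻¹ y⁻¹ = x := by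
  have hxy' : 1 - x * y ≠ 0 := sub_ne_zero.mpr (Ne.symm hxy)
  have hy1' : 1 - y ≠ 0 := sub_ne_zero.mpr (Ne.symm hy1)
  rw [acceptProb_eq hx, acceptProb_eq (inv_ne_zero hx)]
  field_simp
  ring

end DDM

open DDM in
/-- Lemma (DDM log-odds identities): for the DDM choice probabilities
`ρ⁺ = (1 − e^{βΛ})/(e^{−λΛ} − e^{βΛ})` and `ρ⁻ = (1 − e^{−βΛ})/(e^{λΛ} − e^{−βΛ})`
with barriers `λ, β > 0` and value difference `Λ ≠ 0`, one has
`λΛ = ln(ρ⁺/ρ⁻)` and `βΛ = ln((1 − ρ⁻)/(1 − ρ⁺))`. -/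
theorem ddm_log_odds (lam beta Lam : ℝ) (hlam : 0 < lam) (hbeta : 0 < beta)
    (hLam : Lam ≠ 0) (ρp ρm : ℝ)
    (hρp : ρp = (1 - Real.exp (beta * Lam)) /
      (Real.exp (-(lam * Lam)) - Real.exp (beta * Lam)))
    (hρm : ρm = (1 - Real.exp (-(beta * Lam))) /
      (Real.exp (lam * Lam) - Real.exp (-(beta * Lam)))) :
    lam * Lam = Real.log (ρp / ρm) ∧
    beta * Lam = Real.log ((1 - ρm) / (1 - ρp)) := by
  set x := Real.exp (lam * Lam)
  set y := Real.exp (beta * Lam)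
  have hx : x ≠ 0 := (Real.exp_pos _).ne'
  have hy : y ≠ 0 := (Real.exp_pos _).ne'
  have hx1 : x ≠ 1 := fun h => mul_ne_zero hlam.ne' hLam (Real.exp_eq_one_iff _ |>.mp h)
  have hy1 : y ≠ 1 := fun h => mul_ne_zero hbeta.ne' hLam (Real.exp_eq_one_iff _ |>.mp h)
  have hxy : x * y ≠ 1 := by
    rw [← Real.exp_add, ← add_mul]
    exact fun h => mul_ne_zero (add_pos hlam hbeta).ne' hLam (Real.exp_eq_one_iff _ |>.mp h)
  have hp : ρp = acceptProb x y := by rw [hρp, Real.exp_neg]; rfl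
  have hm : ρm = acceptProb x⁻¹ y⁻¹ := by rw [hρm, Real.exp_neg, acceptProb, inv_inv]
  have hyx : y * x ≠ 1 := by rwa [mul_comm]
  have hrej : (1 - ρm) / (1 - ρp) = acceptProb y x / acceptProb y⁻¹ x⁻¹ := by
    rw [hp, hm, one_sub_acceptProb hx hy hxy,
      one_sub_acceptProb (inv_ne_zero hx) (inv_ne_zero hy) (by rwa [← mul_inv, inv_ne_one]),
      inv_inv, inv_inv]
  rw [hrej, acceptProb_div_acceptProb_inv hy hx hx1 hyx, hp, hm,
    acceptProb_div_acceptProb_inv hx hy hy1 hxy, Real.log_exp, Real.log_exp]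
  exact ⟨rfl, rfl⟩
end

section
/- Let λ, β > 0 and Λ ∈ ℝ with Λ ≠ 0. Define ρ⁺ = (1 − e^{βΛ})/(e^{−λΛ} − e^{βΛ}), ρ⁻ = (1 − e^{−βΛ})/(e^{λΛ} − e^{−βΛ}), and τ⁺ = (1/Λ)[ρ⁺(λ+β) − β]. Then τ⁺ = (λ²/(ln ρ⁺ − ln ρ⁻))·[ρ⁺ + ((ln(1−ρ⁻) − ln(1−ρ⁺))/(ln ρ⁺ − ln ρ⁻))·(ρ⁺ − 1)]. -/
/-!
With `x = λΛ` and `y = βΛ` one has `ρ⁺ = ρ(x, y)` and `ρ⁻ = ρ(-x, -y)` for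
`ρ(x, y) = (1 - eʸ) / (e⁻ˣ - eʸ)`. Over the common denominator `eˣ⁺ʸ - 1`,
`ρ⁻ = (eʸ - 1) / (eˣ⁺ʸ - 1)` and `1 - ρ⁺ = (eˣ - 1) / (eˣ⁺ʸ - 1)`, whence `ρ⁺ = eˣ ρ⁻` and
`1 - ρ⁻ = eʸ (1 - ρ⁺)`. So the two log-differences are exactly `λΛ` and `βΛ`, and the formula
for `τ⁺` becomes a rational identity.
-/

open Real

namespace DDM

noncomputable def prob (x y : ℝ) : ℝ := (1 - exp y) / (exp (-x) - exp y)

variable {x y : ℝ}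

lemma exp_sub_one_ne_zero (hx : x ≠ 0) : exp x - 1 ≠ 0 :=
  sub_ne_zero.mpr fun h => hx ((exp_eq_one_iff x).mp h)

lemma prob_neg (x y : ℝ) : prob (-x) (-y) = (exp y - 1) / (exp (x + y) - 1) := by
  rw [prob, ← mul_div_mul_left _ _ (exp_ne_zero y), neg_neg, exp_add, exp_neg]
  field_simp

lemma prob_eq (x y : ℝ) : prob x y = exp x * (exp y - 1) / (exp (x + y) - 1) := by
  rw [prob, ← mul_div_mul_left _ _ (neg_ne_zero.mpr (exp_ne_zero x))]
  congr 1
  · ring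
  · rw [exp_add, exp_neg, mul_sub, neg_mul, mul_inv_cancel₀ (exp_ne_zero x)]
    ring

lemma one_sub_prob (h : x + y ≠ 0) : 1 - prob x y = (exp x - 1) / (exp (x + y) - 1) := by
  rw [prob_eq, one_sub_div (exp_sub_one_ne_zero h), exp_add]
  ring_nf

lemma prob_eq_exp_mul_prob_neg (x y : ℝ) : prob x y = exp x * prob (-x) (-y) := by
  rw [prob_eq, prob_neg, mul_div_assoc]

lemma one_sub_prob_neg_eq_exp_mul (h : x + y ≠ 0) :
    1 - prob (-x) (-y) = exp y * (1 - prob x y) := by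
  rw [prob_neg, one_sub_prob h, one_sub_div (exp_sub_one_ne_zero h), mul_div_assoc', exp_add]
  ring_nf

lemma log_prob_sub_log_prob_neg (hy : y ≠ 0) (h : x + y ≠ 0) :
    log (prob x y) - log (prob (-x) (-y)) = x := by
  have hneg : prob (-x) (-y) ≠ 0 := by
    rw [prob_neg]
    exact div_ne_zero (exp_sub_one_ne_zero hy) (exp_sub_one_ne_zero h)
  rw [prob_eq_exp_mul_prob_neg, log_mul (exp_ne_zero x) hneg, log_exp, add_sub_cancel_right]

lemma log_one_sub_prob_neg_sub_log_one_sub_prob (hx : x ≠ 0) (h : x + y ≠ 0) :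
    log (1 - prob (-x) (-y)) - log (1 - prob x y) = y := by
  have hpos : 1 - prob x y ≠ 0 := by
    rw [one_sub_prob h]
    exact div_ne_zero (exp_sub_one_ne_zero hx) (exp_sub_one_ne_zero h)
  rw [one_sub_prob_neg_eq_exp_mul h, log_mul (exp_ne_zero y) hpos, log_exp, add_sub_cancel_right]

end DDM

/-- Lemma (DDM response time in terms of choice probabilities): for the DDM choice
probabilities `ρ⁺`, `ρ⁻` and mean response time `τ⁺ = (1/Λ)[ρ⁺(λ+β) − β]` with barriers
`λ, β > 0` and value difference `Λ ≠ 0`, one has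
`τ⁺ = (λ²/(ln ρ⁺ − ln ρ⁻))·[ρ⁺ + ((ln(1−ρ⁻) − ln(1−ρ⁺))/(ln ρ⁺ − ln ρ⁻))·(ρ⁺ − 1)]`. -/
theorem ddm_response_time_formula (lam beta Lam : ℝ) (hlam : 0 < lam)
    (hbeta : 0 < beta) (hLam : Lam ≠ 0) (ρp ρm τp : ℝ)
    (hρp : ρp = (1 - Real.exp (beta * Lam)) /
      (Real.exp (-(lam * Lam)) - Real.exp (beta * Lam)))
    (hρm : ρm = (1 - Real.exp (-(beta * Lam))) /
      (Real.exp (lam * Lam) - Real.exp (-(beta * Lam))))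
    (hτp : τp = (1 / Lam) * (ρp * (lam + beta) - beta)) :
    τp = lam ^ 2 / (Real.log ρp - Real.log ρm) *
      (ρp + (Real.log (1 - ρm) - Real.log (1 - ρp)) /
        (Real.log ρp - Real.log ρm) * (ρp - 1)) := by
  have hp : ρp = DDM.prob (lam * Lam) (beta * Lam) := hρp
  have hm : ρm = DDM.prob (-(lam * Lam)) (-(beta * Lam)) := by
    rw [hρm, DDM.prob, neg_neg]
  have hx : lam * Lam ≠ 0 := mul_ne_zero hlam.ne' hLam
  have hy : beta * Lam ≠ 0 := mul_ne_zero hbeta.ne' hLam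
  have hxy : lam * Lam + beta * Lam ≠ 0 := by
    rw [← add_mul]
    exact mul_ne_zero (by positivity) hLam
  rw [hp, hm, DDM.log_prob_sub_log_prob_neg hy hxy,
    DDM.log_one_sub_prob_neg_sub_log_one_sub_prob hx hxy, ← hp, hτp]
  field_simp
  ring
end

section
/- For all x, y ∈ (0,1) with x ≠ y, the equation 2/(x+y) + ln(y/x)/ln((1−y)/(1−x)) = 1 holds if and only if x = 1 − y. -/
/-!
Put `a = log (y / x)` and `b = log ((1 - y) / (1 - x))`. Since `exp a = y / x`, we have
`coth (a / 2) = (y + x) / (y - x)`, and likewise for `b`; clearing denominators turns the equation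
into `F a = F b` for `F s = s * coth (s / 2)`. This `F` is even and strictly increasing on `(0, ∞)`
(its derivative has the sign of `sinh s - s`), so the equation says `a = ± b`. Now `a = b` would
force `x = y`, while `a = -b` means `y (1 - y) = x (1 - x)`, i.e. `x + y = 1`.
-/

open Real Set

/-- `s * coth (s / 2)`, with the junk value `0` at `s = 0`. -/
noncomputable def mulCothHalf (s : ℝ) : ℝ := s * (exp s + 1) / (exp s - 1)

lemma mulCothHalf_neg (s : ℝ) : mulCothHalf (-s) = mulCothHalf s := by
  rcases eq_or_ne s 0 with rfl | hs
  · simp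
  have h : exp s - 1 ≠ 0 := by simpa [sub_eq_zero] using hs
  have h' : 1 - exp s ≠ 0 := by rw [← neg_sub]; exact neg_ne_zero.mpr h
  simp only [mulCothHalf, exp_neg]
  field_simp
  ring

lemma hasDerivAt_mulCothHalf {s : ℝ} (hs : s ≠ 0) :
    HasDerivAt mulCothHalf ((exp s ^ 2 - 1 - 2 * s * exp s) / (exp s - 1) ^ 2) s := by
  have h : exp s - 1 ≠ 0 := by simpa [sub_eq_zero] using hs
  exact (((hasDerivAt_id' s).mul ((hasDerivAt_exp s).add_const 1)).div
    ((hasDerivAt_exp s).sub_const 1) h).congr_deriv (by simp only [Pi.mul_apply]; ring)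

lemma strictMonoOn_mulCothHalf : StrictMonoOn mulCothHalf (Ioi 0) := by
  refine strictMonoOn_of_hasDerivWithinAt_pos (convex_Ioi 0)
    (fun s hs => (hasDerivAt_mulCothHalf (ne_of_gt hs)).continuousAt.continuousWithinAt)
    (fun s hs => (hasDerivAt_mulCothHalf (ne_of_gt (interior_subset hs))).hasDerivWithinAt) ?_
  intro s hs
  rw [interior_Ioi] at hs
  have hsinh : 0 < sinh s - s := sub_pos.mpr (self_lt_sinh_iff.mpr hs)
  have hexp : 0 < exp s - 1 := sub_pos.mpr (one_lt_exp_iff.mpr hs)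
  have hnum : exp s ^ 2 - 1 - 2 * s * exp s = 2 * exp s * (sinh s - s) := by
    rw [sinh_eq, exp_neg]; field_simp
  rw [hnum]
  positivity

lemma mulCothHalf_eq_iff {a b : ℝ} (ha : a ≠ 0) (hb : b ≠ 0) :
    mulCothHalf a = mulCothHalf b ↔ |a| = |b| := by
  have habs : ∀ s, mulCothHalf |s| = mulCothHalf s := fun s => by
    rcases abs_choice s with h | h <;> rw [h]; exact mulCothHalf_neg s
  rw [← habs a, ← habs b]
  exact strictMonoOn_mulCothHalf.injOn.eq_iff (abs_pos.mpr ha) (abs_pos.mpr hb)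

lemma mulCothHalf_log_div {p q : ℝ} (hp : 0 < p) (hq : 0 < q) :
    mulCothHalf (log (p / q)) = (p + q) / (p - q) * log (p / q) := by
  rw [mulCothHalf, exp_log (div_pos hp hq)]
  rcases eq_or_ne p q with rfl | hpq
  · simp
  have : p - q ≠ 0 := sub_ne_zero.mpr hpq
  field_simp

lemma log_div_eq_log_div_iff {p q r s : ℝ} (hp : 0 < p) (hq : 0 < q) (hr : 0 < r) (hs : 0 < s) :
    log (p / q) = log (r / s) ↔ p * s = r * q := by
  rw [log_injOn_pos.eq_iff (div_pos hp hq) (div_pos hr hs), div_eq_div_iff hq.ne' hs.ne']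

/-- The locus of pairs `(x, y) ∈ (0,1)², x ≠ y`, solving
`2/(x+y) + ln(y/x)/ln((1−y)/(1−x)) = 1` is exactly `{(x, y) : x = 1 − y}`. -/
theorem locus_equation_iff (x y : ℝ) (hx : x ∈ Set.Ioo (0 : ℝ) 1)
    (hy : y ∈ Set.Ioo (0 : ℝ) 1) (hxy : x ≠ y) :
    2 / (x + y) + Real.log (y / x) / Real.log ((1 - y) / (1 - x)) = 1 ↔
      x = 1 - y := by
  obtain ⟨hx0, hx1⟩ := hx
  obtain ⟨hy0, hy1⟩ := hy
  have hx1' : 0 < 1 - x := sub_pos.mpr hx1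
  have hy1' : 0 < 1 - y := sub_pos.mpr hy1
  have hyx : y - x ≠ 0 := sub_ne_zero.mpr hxy.symm
  have hyx' : 1 - y - (1 - x) ≠ 0 := by rwa [sub_sub_sub_cancel_left, sub_ne_zero]
  have ha : log (y / x) ≠ 0 :=
    log_ne_zero_of_pos_of_ne_one (div_pos hy0 hx0) (div_ne_one_of_ne hxy.symm)
  have hb : log ((1 - y) / (1 - x)) ≠ 0 :=
    log_ne_zero_of_pos_of_ne_one (div_pos hy1' hx1') (div_ne_one_of_ne (sub_ne_zero.mp hyx'))
  have hab : log (y / x) ≠ log ((1 - y) / (1 - x)) := by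
    rw [Ne, log_div_eq_log_div_iff hy0 hx0 hy1' hx1']
    intro h; exact hxy (by linarith)
  calc _ ↔ mulCothHalf (log (y / x)) = mulCothHalf (log ((1 - y) / (1 - x))) := by
        rw [mulCothHalf_log_div hy0 hx0, mulCothHalf_log_div hy1' hx1']
        field_simp
        constructor
        · intro h; linear_combination (x - y) * h
        · intro h; exact mul_left_cancel₀ (sub_ne_zero.mpr hxy) (by linear_combination h)
    _ ↔ log (y / x) = -log ((1 - y) / (1 - x)) := by
        rw [mulCothHalf_eq_iff ha hb, abs_eq_abs, or_iff_right hab]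
    _ ↔ (y - x) * (1 - x - y) = 0 := by
        rw [← log_inv, inv_div, log_div_eq_log_div_iff hy0 hx0 hx1' hy1', ← sub_eq_zero]
        ring_nf
    _ ↔ x = 1 - y := by
        rw [mul_eq_zero, or_iff_right hyx]
        constructor <;> intro h <;> linarith
end

section
/- Let λ, β > 0 and Λ ∈ ℝ with Λ ≠ 0. Define ρ⁺ = (1 − e^{βΛ})/(e^{−λΛ} − e^{βΛ}), ρ⁻ = (1 − e^{−βΛ})/(e^{λΛ} − e^{−βΛ}), τ⁺ = (1/Λ)[ρ⁺(λ+β) − β], ℓ = ln(ρ⁺/ρ⁻) and ℓ̄ = ln((1−ρ⁻)/(1−ρ⁺)). Then ℓ ≠ 0, λ = |ℓ|·√(τ⁺/(ℓρ⁺ + ℓ̄(ρ⁺ − 1))), and β = λ·ℓ̄/ℓ. In particular, the elements λ and β are uniquely identified by (ρ⁺, ρ⁻, τ⁺). -/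
/-!
With `x = λΛ` and `y = βΛ` one has `ρ⁺ = eˣ ρ⁻` and `1 - ρ⁻ = eʸ (1 - ρ⁺)`, so `ℓ = λΛ` and
`ℓ̄ = βΛ`. Then `ℓρ⁺ + ℓ̄(ρ⁺ - 1) = Λ(ρ⁺(λ + β) - β) = Λ²τ⁺`, and `τ⁺ > 0` because `eᵗ > 1 + t`
for `t ≠ 0`; hence the square root is `1/|Λ|` and `|ℓ|/|Λ| = λ`. Since these formulas involve
only `(ρ⁺, ρ⁻, τ⁺)`, any other parameters producing the same data have the same barriers.
-/

open Real

/-- The acceptance probability `ρ⁺` in terms of `x = λΛ` and `y = βΛ`; the rejection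
probability `ρ⁻` is `ddmProb (-x) (-y)`. -/
noncomputable def ddmProb (x y : ℝ) : ℝ := (1 - exp y) / (exp (-x) - exp y)

section

variable {x y : ℝ}

lemma exp_neg_sub_exp_ne_zero (hxy : x + y ≠ 0) : exp (-x) - exp y ≠ 0 :=
  sub_ne_zero.2 fun h => hxy (by linarith [exp_injective h])

lemma exp_sub_exp_neg_ne_zero (hxy : x + y ≠ 0) : exp x - exp (-y) ≠ 0 :=
  sub_ne_zero.2 fun h => hxy (by linarith [exp_injective h])

lemma ddmProb_eq_exp_mul (hxy : x + y ≠ 0) : ddmProb x y = exp x * ddmProb (-x) (-y) := by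
  have hd := exp_neg_sub_exp_ne_zero hxy
  have hd' := exp_sub_exp_neg_ne_zero hxy
  unfold ddmProb
  rw [neg_neg, eq_comm, mul_div_assoc', div_eq_div_iff hd' hd, exp_neg, exp_neg]
  field_simp
  ring

lemma one_sub_ddmProb_neg (hxy : x + y ≠ 0) :
    1 - ddmProb (-x) (-y) = exp y * (1 - ddmProb x y) := by
  have hd := exp_neg_sub_exp_ne_zero hxy
  have hd' := exp_sub_exp_neg_ne_zero hxy
  unfold ddmProb
  rw [neg_neg, one_sub_div hd, one_sub_div hd', mul_div_assoc', div_eq_div_iff hd' hd,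
    exp_neg, exp_neg]
  field_simp
  ring

lemma ddmProb_neg_ne_zero (hy : y ≠ 0) (hxy : x + y ≠ 0) : ddmProb (-x) (-y) ≠ 0 := by
  unfold ddmProb
  rw [neg_neg]
  refine div_ne_zero (sub_ne_zero.2 fun h => hy ?_) (exp_sub_exp_neg_ne_zero hxy)
  exact neg_eq_zero.1 ((exp_eq_one_iff _).1 h.symm)

lemma one_sub_ddmProb_ne_zero (hx : x ≠ 0) (hxy : x + y ≠ 0) : 1 - ddmProb x y ≠ 0 := by
  have hd := exp_neg_sub_exp_ne_zero hxy
  unfold ddmProb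
  rw [one_sub_div hd, sub_sub_sub_cancel_right]
  refine div_ne_zero (sub_ne_zero.2 fun h => hx ?_) hd
  exact neg_eq_zero.1 ((exp_eq_one_iff _).1 h)

lemma log_ddmProb_div (hy : y ≠ 0) (hxy : x + y ≠ 0) :
    log (ddmProb x y / ddmProb (-x) (-y)) = x := by
  rw [ddmProb_eq_exp_mul hxy, mul_div_cancel_right₀ _ (ddmProb_neg_ne_zero hy hxy), log_exp]

lemma log_one_sub_ddmProb_div (hx : x ≠ 0) (hxy : x + y ≠ 0) :
    log ((1 - ddmProb (-x) (-y)) / (1 - ddmProb x y)) = y := by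
  rw [one_sub_ddmProb_neg hxy, mul_div_cancel_right₀ _ (one_sub_ddmProb_ne_zero hx hxy), log_exp]

lemma add_mul_ddmProb_sub (hxy : x + y ≠ 0) :
    (x + y) * ddmProb x y - y =
      (x * (1 - exp y) + y * (1 - exp (-x))) / (exp (-x) - exp y) := by
  have hd := exp_neg_sub_exp_ne_zero hxy
  unfold ddmProb
  field_simp
  ring

lemma add_mul_ddmProb_sub_pos (hxy : 0 < x * y) : 0 < (x + y) * ddmProb x y - y := by
  have hx : x ≠ 0 := left_ne_zero_of_mul hxy.ne'
  have hy : y ≠ 0 := right_ne_zero_of_mul hxy.ne'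
  have hey := add_one_lt_exp hy
  have hex := add_one_lt_exp (neg_ne_zero.2 hx)
  rcases hx.lt_or_gt with hx | hx
  · have hy : y < 0 := neg_of_mul_pos_right hxy hx.le
    rw [add_mul_ddmProb_sub (by linarith)]
    exact div_pos (by nlinarith) (sub_pos.2 (exp_lt_exp.2 (by linarith)))
  · have hy : 0 < y := pos_of_mul_pos_right hxy hx.le
    rw [add_mul_ddmProb_sub (by linarith)]
    exact div_pos_of_neg_of_neg (by nlinarith) (sub_neg.2 (exp_lt_exp.2 (by linarith)))

end

theorem ddm_barriers_eq {lam beta Lam ρp ρm τp : ℝ} (hlam : 0 < lam) (hbeta : 0 < beta)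
    (hLam : Lam ≠ 0) (hρp : ρp = ddmProb (lam * Lam) (beta * Lam))
    (hρm : ρm = ddmProb (-(lam * Lam)) (-(beta * Lam)))
    (hτp : τp = (1 / Lam) * (ρp * (lam + beta) - beta)) :
    lam = |log (ρp / ρm)| *
        √(τp / (log (ρp / ρm) * ρp + log ((1 - ρm) / (1 - ρp)) * (ρp - 1))) ∧
      beta = lam * log ((1 - ρm) / (1 - ρp)) / log (ρp / ρm) := by
  have hx : lam * Lam ≠ 0 := mul_ne_zero hlam.ne' hLam
  have hxy : 0 < lam * Lam * (beta * Lam) := by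
    rw [show lam * Lam * (beta * Lam) = lam * beta * Lam ^ 2 by ring]
    positivity
  have hsum : lam * Lam + beta * Lam ≠ 0 := by
    rw [← add_mul]; exact mul_ne_zero (by positivity) hLam
  rw [hρm, hρp, log_ddmProb_div (mul_ne_zero hbeta.ne' hLam) hsum,
    log_one_sub_ddmProb_div hx hsum, ← hρp]
  have hD : lam * Lam * ρp + beta * Lam * (ρp - 1) = Lam ^ 2 * τp := by
    rw [hτp]; field_simp; ring
  have hτ : τp ≠ 0 := by
    rintro rfl
    have := add_mul_ddmProb_sub_pos hxy
    rw [← hρp] at this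
    linarith
  constructor
  · rw [hD, div_mul_cancel_right₀ hτ, sqrt_inv, sqrt_sq_eq_abs, abs_mul, abs_of_pos hlam,
      mul_inv_cancel_right₀ (abs_ne_zero.2 hLam)]
  · field_simp

/-- Proposition (identification of the DDM): the barriers `λ` and `β` of a DDM are
recovered from the generated choice probabilities `ρ⁺, ρ⁻` and mean response time `τ⁺`
via the log-odds `ℓ = ln(ρ⁺/ρ⁻)` and `ℓ̄ = ln((1−ρ⁻)/(1−ρ⁺))`:
`ℓ ≠ 0`, `λ = |ℓ|·√(τ⁺/(ℓρ⁺ + ℓ̄(ρ⁺−1)))` and `β = λℓ̄/ℓ`; in particular `λ` and `β`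
are uniquely identified by `(ρ⁺, ρ⁻, τ⁺)`. -/
theorem ddm_identification (lam beta Lam : ℝ) (hlam : 0 < lam) (hbeta : 0 < beta)
    (hLam : Lam ≠ 0) (ρp ρm τp ell ellbar : ℝ)
    (hρp : ρp = (1 - Real.exp (beta * Lam)) /
      (Real.exp (-(lam * Lam)) - Real.exp (beta * Lam)))
    (hρm : ρm = (1 - Real.exp (-(beta * Lam))) /
      (Real.exp (lam * Lam) - Real.exp (-(beta * Lam))))
    (hτp : τp = (1 / Lam) * (ρp * (lam + beta) - beta))
    (hell : ell = Real.log (ρp / ρm))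
    (hellbar : ellbar = Real.log ((1 - ρm) / (1 - ρp))) :
    ell ≠ 0 ∧
    lam = |ell| * Real.sqrt (τp / (ell * ρp + ellbar * (ρp - 1))) ∧
    beta = lam * ellbar / ell ∧
    (∀ lam' beta' Lam' : ℝ, 0 < lam' → 0 < beta' → Lam' ≠ 0 →
      ρp = (1 - Real.exp (beta' * Lam')) /
        (Real.exp (-(lam' * Lam')) - Real.exp (beta' * Lam')) →
      ρm = (1 - Real.exp (-(beta' * Lam'))) /
        (Real.exp (lam' * Lam') - Real.exp (-(beta' * Lam'))) →
      τp = (1 / Lam') * (ρp * (lam' + beta') - beta') →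
      lam' = lam ∧ beta' = beta) := by
  subst hell hellbar
  obtain ⟨hlam_eq, hbeta_eq⟩ :=
    ddm_barriers_eq (ρm := ρm) hlam hbeta hLam hρp (by rw [hρm, ddmProb, neg_neg]) hτp
  refine ⟨fun hell => ?_, hlam_eq, hbeta_eq, ?_⟩
  · rw [hell, abs_zero, zero_mul] at hlam_eq
    exact hlam.ne' hlam_eq
  · intro lam' beta' Lam' hlam' hbeta' hLam' hρp' hρm' hτp'
    obtain ⟨hlam_eq', hbeta_eq'⟩ :=
      ddm_barriers_eq (ρm := ρm) hlam' hbeta' hLam' hρp' (by rw [hρm', ddmProb, neg_neg]) hτp'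
    have hlam_lam' : lam' = lam := hlam_eq'.trans hlam_eq.symm
    exact ⟨hlam_lam', by rw [hbeta_eq', hbeta_eq, hlam_lam']⟩
end

section
/- Let λ, β > 0 and Λ ∈ ℝ with Λ ≠ 0. Define ρ⁺ = (1 − e^{βΛ})/(e^{−λΛ} − e^{βΛ}), ρ⁻ = (1 − e^{−βΛ})/(e^{λΛ} − e^{−βΛ}), τ⁺ = (1/Λ)[ρ⁺(λ+β) − β] and τ⁻ = (1/(−Λ))[ρ⁻(λ+β) − β]. Then the following are equivalent: (i) β = λ; (ii) τ⁺ = τ⁻; (iii) ρ⁺ = 1 − ρ⁻. Moreover, when β = λ, one has ρ⁺ = 1/(1 + e^{−λΛ}) and τ⁺ = (λ²/(λΛ))·tanh(λΛ/2). -/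
/-
With `V = (λ + β)Λ/2` and `W = (β − λ)Λ/2`, the closed forms become
`ρ^± = e^{±λΛ/2} sinh(βΛ/2) / sinh V`, hence `ρ⁺ + ρ⁻ − 1 = sinh W / sinh V` and
`τ⁺ − τ⁻ = 2 (V sinh W − W sinh V) / (Λ² sinh V)`. The first vanishes iff `W = 0`. The second
vanishes iff `sinh W / W = sinh V / V` (or `W = 0`); as `|W| < |V|` and `t ↦ sinh t / t` is
strictly increasing in `|t|` (strict convexity of `sinh` on `[0, ∞)`), this again forces `W = 0`.
-/

open Real Set

lemma strictConvexOn_sinh : StrictConvexOn ℝ (Ici 0) sinh :=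
  strictConvexOn_of_deriv2_pos (convex_Ici 0) continuous_sinh.continuousOn fun x hx => by
    rw [interior_Ici, mem_Ioi] at hx
    simpa [Real.deriv_sinh, Real.deriv_cosh] using hx

lemma sinh_div_self_lt_sinh_div_self {u v : ℝ} (hu : 0 < u) (huv : u < v) :
    sinh u / u < sinh v / v := by
  simpa using strictConvexOn_sinh.secant_strict_mono self_mem_Ici (mem_Ici.2 hu.le)
    (mem_Ici.2 (hu.trans huv).le) hu.ne' (hu.trans huv).ne' huv

lemma eq_zero_of_mul_sinh_eq_mul_sinh {u v : ℝ} (huv : |u| < |v|)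
    (h : v * sinh u = u * sinh v) : u = 0 := by
  by_contra hu
  have hu' : 0 < |u| := abs_pos.2 hu
  have hlt := sinh_div_self_lt_sinh_div_self hu' huv
  rw [div_lt_div_iff₀ hu' (hu'.trans huv), ← abs_sinh, ← abs_sinh, ← abs_mul, ← abs_mul,
    mul_comm (sinh v), mul_comm, h] at hlt
  exact hlt.false

-- `ρ⁺` and `τ⁺` as functions of `Λ`; `ρ⁻` and `τ⁻` are their values at `-Λ`.
noncomputable def ddmAcceptProb (lam beta Lam : ℝ) : ℝ :=
  (1 - exp (beta * Lam)) / (exp (-(lam * Lam)) - exp (beta * Lam))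

noncomputable def ddmMeanTime (lam beta Lam : ℝ) : ℝ :=
  (1 / Lam) * (ddmAcceptProb lam beta Lam * (lam + beta) - beta)

section
variable {lam beta Lam : ℝ}

lemma ddmAcceptProb_eq_exp_mul_sinh_div_sinh (h : (lam + beta) * Lam ≠ 0) :
    ddmAcceptProb lam beta Lam =
      exp (lam * Lam / 2) * sinh (beta * Lam / 2) / sinh ((lam + beta) * Lam / 2) := by
  have hs : sinh ((lam + beta) * Lam / 2) ≠ 0 := sinh_ne_zero.2 (by simpa using h)
  have hd : exp (-(lam * Lam)) - exp (beta * Lam) ≠ 0 := by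
    rw [sub_ne_zero, Ne, exp_eq_exp]; intro h'; apply h; linarith
  rw [ddmAcceptProb, div_eq_div_iff hd hs, sinh_eq, sinh_eq]
  set p := exp (lam * Lam / 2)
  set q := exp (beta * Lam / 2)
  have hp0 : p ≠ 0 := exp_ne_zero _
  have hq0 : q ≠ 0 := exp_ne_zero _
  have hp : exp (-(lam * Lam)) = (p ^ 2)⁻¹ := by rw [← exp_nat_mul, ← exp_neg]; ring_nf
  have hq : exp (beta * Lam) = q ^ 2 := by rw [← exp_nat_mul]; ring_nf
  have hpq : exp ((lam + beta) * Lam / 2) = p * q := by rw [← exp_add]; ring_nf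
  rw [exp_neg, exp_neg, hp, hq, hpq]
  field_simp
  ring

lemma ddmAcceptProb_add_neg_sub_one (h : (lam + beta) * Lam ≠ 0) :
    ddmAcceptProb lam beta Lam + ddmAcceptProb lam beta (-Lam) - 1 =
      sinh ((beta - lam) * Lam / 2) / sinh ((lam + beta) * Lam / 2) := by
  have h' : (lam + beta) * -Lam ≠ 0 := by rwa [mul_neg, neg_ne_zero]
  have hs : sinh ((lam + beta) * Lam / 2) ≠ 0 := sinh_ne_zero.2 (by simpa using h)
  rw [ddmAcceptProb_eq_exp_mul_sinh_div_sinh h, ddmAcceptProb_eq_exp_mul_sinh_div_sinh h']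
  simp only [mul_neg, neg_div, sinh_neg]
  rw [show (lam + beta) * Lam / 2 = lam * Lam / 2 + beta * Lam / 2 by ring,
    show (beta - lam) * Lam / 2 = beta * Lam / 2 - lam * Lam / 2 by ring] at *
  generalize lam * Lam / 2 = a, beta * Lam / 2 = b at *
  calc _ = ((exp a + exp (-a)) * sinh b - sinh (a + b)) / sinh (a + b) := by
        field_simp
    _ = sinh (b - a) / sinh (a + b) := by
        congr 1; rw [sinh_add, sinh_sub, cosh_eq a]; ring

lemma ddmMeanTime_sub_neg (h : (lam + beta) * Lam ≠ 0) :
    ddmMeanTime lam beta Lam - ddmMeanTime lam beta (-Lam) =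
      2 * ((lam + beta) * Lam / 2 * sinh ((beta - lam) * Lam / 2) -
        (beta - lam) * Lam / 2 * sinh ((lam + beta) * Lam / 2)) /
        (Lam ^ 2 * sinh ((lam + beta) * Lam / 2)) := by
  have hs : sinh ((lam + beta) * Lam / 2) ≠ 0 := sinh_ne_zero.2 (by simpa using h)
  have hLam : Lam ≠ 0 := right_ne_zero_of_mul h
  have hneg : ddmAcceptProb lam beta (-Lam) = 1 + sinh ((beta - lam) * Lam / 2) /
      sinh ((lam + beta) * Lam / 2) - ddmAcceptProb lam beta Lam := by
    linear_combination ddmAcceptProb_add_neg_sub_one h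
  rw [ddmMeanTime, ddmMeanTime, hneg]
  generalize sinh ((lam + beta) * Lam / 2) = sV at *
  generalize sinh ((beta - lam) * Lam / 2) = sW
  field_simp
  ring

lemma ddmAcceptProb_self (h : lam * Lam ≠ 0) :
    ddmAcceptProb lam lam Lam = 1 / (1 + exp (-(lam * Lam))) := by
  have h1 : 1 - exp (lam * Lam) ≠ 0 := by
    rw [sub_ne_zero, ne_comm, Ne, exp_eq_one_iff]; exact h
  rw [ddmAcceptProb, exp_neg]
  have he : (exp (lam * Lam))⁻¹ - exp (lam * Lam) =
      (1 - exp (lam * Lam)) * (1 + exp (lam * Lam)) / exp (lam * Lam) := by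
    field_simp; ring
  rw [he]
  field_simp
  ring

lemma ddmMeanTime_self (h : lam * Lam ≠ 0) :
    ddmMeanTime lam lam Lam = lam ^ 2 / (lam * Lam) * tanh (lam * Lam / 2) := by
  rw [ddmMeanTime, ddmAcceptProb_self h, tanh_eq_sinh_div_cosh, sinh_eq, cosh_eq]
  have he : exp (-(lam * Lam)) = exp (-(lam * Lam / 2)) ^ 2 := by rw [← exp_nat_mul]; ring_nf
  have hLam : Lam ≠ 0 := right_ne_zero_of_mul h
  have hlam : lam ≠ 0 := left_ne_zero_of_mul h
  rw [he, exp_neg]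
  field_simp
  ring

lemma ddmAcceptProb_add_neg_eq_one_iff (hlb : lam + beta ≠ 0) (hLam : Lam ≠ 0) :
    ddmAcceptProb lam beta Lam + ddmAcceptProb lam beta (-Lam) = 1 ↔ beta = lam := by
  rw [← sub_eq_zero, ddmAcceptProb_add_neg_sub_one (mul_ne_zero hlb hLam), div_eq_zero_iff,
    sinh_eq_zero, sinh_eq_zero]
  simp [hlb, hLam, sub_eq_zero]

lemma ddmMeanTime_eq_ddmMeanTime_neg_iff (hlb : 0 < lam * beta) (hLam : Lam ≠ 0) :
    ddmMeanTime lam beta Lam = ddmMeanTime lam beta (-Lam) ↔ beta = lam := by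
  have hlb' : lam + beta ≠ 0 := by
    intro h0
    rw [eq_neg_of_add_eq_zero_right h0] at hlb
    nlinarith [sq_nonneg lam]
  have h : (lam + beta) * Lam ≠ 0 := mul_ne_zero hlb' hLam
  have hs : sinh ((lam + beta) * Lam / 2) ≠ 0 := sinh_ne_zero.2 (by simpa using h)
  have hW : (beta - lam) * Lam / 2 = 0 ↔ beta = lam := by simp [hLam, sub_eq_zero]
  have habs : |(beta - lam) * Lam / 2| < |(lam + beta) * Lam / 2| := by
    rw [← sq_lt_sq]
    nlinarith [mul_pos hlb (pow_pos (abs_pos.2 hLam) 2), sq_abs Lam]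
  rw [← sub_eq_zero, ddmMeanTime_sub_neg h, div_eq_zero_iff, ← hW]
  constructor
  · rintro (hnum | hden)
    · exact eq_zero_of_mul_sinh_eq_mul_sinh habs (by linear_combination hnum / 2)
    · exact absurd hden (mul_ne_zero (pow_ne_zero 2 hLam) hs)
  · intro hW0
    simp [hW0]

end

/-- Proposition (characterization of symmetric DDMs): with barriers `λ, β > 0` and
value difference `Λ ≠ 0`, the conditions `β = λ`, `τ⁺ = τ⁻` and `ρ⁺ = 1 − ρ⁻` are
equivalent; moreover, when `β = λ`, `ρ⁺ = 1/(1 + e^{−λΛ})` and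
`τ⁺ = (λ²/(λΛ))·tanh(λΛ/2)`. -/
theorem ddm_symmetric_characterization (lam beta Lam : ℝ) (hlam : 0 < lam)
    (hbeta : 0 < beta) (hLam : Lam ≠ 0) (ρp ρm τp τm : ℝ)
    (hρp : ρp = (1 - Real.exp (beta * Lam)) /
      (Real.exp (-(lam * Lam)) - Real.exp (beta * Lam)))
    (hρm : ρm = (1 - Real.exp (-(beta * Lam))) /
      (Real.exp (lam * Lam) - Real.exp (-(beta * Lam))))
    (hτp : τp = (1 / Lam) * (ρp * (lam + beta) - beta))
    (hτm : τm = (1 / (-Lam)) * (ρm * (lam + beta) - beta)) :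
    (beta = lam ↔ τp = τm) ∧
    (beta = lam ↔ ρp = 1 - ρm) ∧
    (beta = lam →
      ρp = 1 / (1 + Real.exp (-(lam * Lam))) ∧
      τp = lam ^ 2 / (lam * Lam) * Real.tanh (lam * Lam / 2)) := by
  replace hρm : ρm = ddmAcceptProb lam beta (-Lam) := by
    rw [hρm, ddmAcceptProb]; simp only [mul_neg, neg_neg]
  replace hτp : τp = ddmMeanTime lam beta Lam := by rw [hτp, hρp, ddmMeanTime, ddmAcceptProb]
  replace hτm : τm = ddmMeanTime lam beta (-Lam) := by rw [hτm, hρm, ddmMeanTime]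
  replace hρp : ρp = ddmAcceptProb lam beta Lam := hρp
  subst hρp hρm hτp hτm
  refine ⟨(ddmMeanTime_eq_ddmMeanTime_neg_iff (mul_pos hlam hbeta) hLam).symm, ?_, ?_⟩
  · rw [eq_sub_iff_add_eq]
    exact (ddmAcceptProb_add_neg_eq_one_iff (by positivity) hLam).symm
  · rintro rfl
    exact ⟨ddmAcceptProb_self (mul_ne_zero hbeta.ne' hLam),
      ddmMeanTime_self (mul_ne_zero hbeta.ne' hLam)⟩
end

section
/- Let M be a stochastic matrix of finite order, ζ ∈ (0,1), and r ≥ 1 an integer. For n ≥ 0 let P[N>n] = ∑_{m=n+1}^∞ C(m+r−1, r−1) ζᵐ (1−ζ)ʳ (the survival probabilities of the negative binomial distribution). Then the series ∑_{n=0}^∞ P[N>n] Mⁿ converges entrywise and equals −(∑_{k=0}^{r} C(r,k) (−ζ)ᵏ ∑_{j=0}^{k−1} Mʲ)·(I − ζM)^{−r}, with the convention that the inner sum ∑_{j=0}^{k−1} Mʲ is the zero matrix when k = 0. -/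
/-!
Write `T = ∑ₖ P[N>k] Xᵏ`, `G = ∑ₛ C(s+r-1, r-1) ζˢ Xˢ = (1 - ζX)⁻ʳ` and
`S = ∑ᵢ C(r,i) (-ζ)ⁱ (1 + X + ⋯ + X^{i-1})` in `ℝ⟦X⟧`. Telescoping the tails gives
`(1 - X) T = 1 - (1-ζ)ʳ G`, and the geometric sums give `(1 - X) S = (1-ζ)ʳ - (1 - ζX)ʳ`, so
`T = -S G` after cancelling the unit `1 - X`. The cancellation must happen formally, since
`1 - M` is singular for a stochastic `M`.

Multiplying a power series by a polynomial commutes with evaluating it at `M` wherever the series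
converges, so it remains to evaluate `G` at `M`: the series converges because the powers of a
stochastic matrix have entries in `[0, 1]`, and `(1 - ζX)ʳ G = 1` identifies its sum as
`(1 - ζM)⁻ʳ`.
-/

open Finset

/-- A (left) stochastic matrix: nonnegative entries, each column sums to 1. -/
def IsStochastic {n : Type*} [Fintype n] (B : Matrix n n ℝ) : Prop :=
  (∀ i j, 0 ≤ B i j) ∧ ∀ j, ∑ i, B i j = 1

section Stochastic

variable {n : Type*} [Fintype n] {A B : Matrix n n ℝ}

attribute [local instance] Matrix.normedAddCommGroup Matrix.normedSpace

theorem IsStochastic.mul (hA : IsStochastic A) (hB : IsStochastic B) : IsStochastic (A * B) := by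
  refine ⟨fun i j => sum_nonneg fun k _ => mul_nonneg (hA.1 i k) (hB.1 k j), fun j => ?_⟩
  simp only [Matrix.mul_apply]
  rw [sum_comm]
  simp only [← sum_mul, hA.2, one_mul, hB.2]

theorem isStochastic_one [DecidableEq n] : IsStochastic (1 : Matrix n n ℝ) :=
  ⟨fun i j => by by_cases h : i = j <;> simp [Matrix.one_apply, h],
    fun j => by simp [Matrix.one_apply]⟩

theorem IsStochastic.pow [DecidableEq n] (hA : IsStochastic A) (k : ℕ) : IsStochastic (A ^ k) := by
  induction k with
  | zero => exact isStochastic_one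
  | succ k ih => rw [pow_succ]; exact ih.mul hA

theorem IsStochastic.abs_apply_le_one (hA : IsStochastic A) (i j : n) : |A i j| ≤ 1 := by
  rw [abs_of_nonneg (hA.1 i j), ← hA.2 j]
  exact single_le_sum (fun k _ => hA.1 k j) (mem_univ i)

theorem IsStochastic.summable_smul_pow [DecidableEq n] (hA : IsStochastic A) {a : ℕ → ℝ}
    (ha : Summable a) : Summable fun k => a k • A ^ k := by
  refine ha.abs.of_norm_bounded fun k => ?_
  rw [norm_smul, Real.norm_eq_abs]
  refine mul_le_of_le_one_right (abs_nonneg _) ((Matrix.norm_le_iff zero_le_one).2 fun i j => ?_)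
  exact (hA.pow k).abs_apply_le_one i j

end Stochastic

section AevalMul

open PowerSeries

variable {R A : Type*} [CommRing R] [Ring A] [Algebra R A] [TopologicalSpace A]
  [IsTopologicalRing A]

theorem HasSum.aeval_mul {x z : A} {f : ℕ → R} (h : HasSum (fun k => f k • x ^ k) z)
    (q : Polynomial R) :
    HasSum (fun k => coeff k ((q : R⟦X⟧) * mk f) • x ^ k) (Polynomial.aeval x q * z) := by
  induction q using Polynomial.induction_on' with
  | add p q hp hq => simpa [add_mul, add_smul] using hp.add hq
  | monomial i a =>
    have hshift : HasSum (fun k => (a * f k) • x ^ (i + k)) ((a • x ^ i) * z) := by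
      refine (h.mul_left (a • x ^ i)).congr_fun fun k => ?_
      simp [pow_add, mul_smul, smul_comm a]
    have hcoeff : ∀ k, coeff k (monomial i a * mk f) =
        if i ≤ k then a * f (k - i) else 0 := by
      intro k
      have hmon : (monomial i a : R⟦X⟧) = C a * X ^ i := by
        ext m; simp [coeff_monomial, coeff_X_pow, eq_comm]
      rw [hmon, mul_comm (C a), mul_assoc, coeff_X_pow_mul']
      split_ifs <;> simp [coeff_C_mul]
    rw [Polynomial.coe_monomial, ← hasSum_nat_add_iff' i]
    have hinit : ∑ k ∈ range i, coeff k (monomial i a * mk f) • x ^ k = 0 :=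
      sum_eq_zero fun k hk => by simp [hcoeff, not_le.2 (mem_range.1 hk)]
    rw [hinit, sub_zero, Polynomial.aeval_monomial, ← Algebra.smul_def]
    simpa [hcoeff, add_comm _ i] using hshift

end AevalMul

section PowerSeries

open PowerSeries

variable {R : Type*} [CommRing R]

theorem mk_choose_mul_pow_mul_one_sub_C_mul_X_pow (ζ : R) (d : ℕ) :
    mk (fun s => ((s + d).choose d : R) * ζ ^ s) * (1 - C ζ * X) ^ (d + 1) = 1 := by
  have h := congrArg (rescale ζ) (mk_add_choose_mul_one_sub_pow_eq_one R d)
  rw [map_mul, map_pow, map_sub, map_one, rescale_X] at h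
  convert h using 2
  ext s
  simp [coeff_rescale, add_comm, mul_comm]

theorem one_sub_X_mul_mk_tsum_tail [TopologicalSpace R] [IsTopologicalAddGroup R] [T2Space R]
    {f : ℕ → R} {a : R} (hf : HasSum f a) :
    (1 - X) * PowerSeries.mk (fun k => ∑' m, f (k + 1 + m)) = C a - PowerSeries.mk f := by
  have htail : ∀ k, ∑' m, f (k + m) = f k + ∑' m, f (k + 1 + m) := fun k => by
    have hk : Summable fun m => f (k + m) := by
      simpa only [add_comm k] using (summable_nat_add_iff k).2 hf.summable
    rw [hk.tsum_eq_zero_add]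
    simp only [add_zero, add_assoc, add_comm 1]
  ext k
  rcases k with _ | k
  · have h0 := htail 0
    simp only [zero_add] at h0
    rw [hf.tsum_eq] at h0
    simp [sub_mul, h0]
  · simp [sub_mul, coeff_succ_X_mul, htail (k + 1)]

end PowerSeries

section Polynomial

open Polynomial

variable {R : Type*} [CommRing R]

theorem sum_choose_mul_neg_pow_smul_pow {A : Type*} [Ring A] [Algebra R A] (ζ : R) (y : A)
    (r : ℕ) :
    ∑ i ∈ range (r + 1), ((r.choose i : R) * (-ζ) ^ i) • y ^ i = (1 - ζ • y) ^ r := by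
  rw [sub_eq_neg_add, ← neg_smul, (Commute.one_right _).add_pow]
  refine sum_congr rfl fun i _ => ?_
  rw [one_pow, mul_one, _root_.smul_pow, mul_comm, mul_smul, Nat.cast_smul_eq_nsmul, nsmul_eq_mul,
    Nat.cast_comm, smul_mul_assoc]

noncomputable def negBinomialSurvivalNumerator (ζ : R) (r : ℕ) : R[X] :=
  ∑ i ∈ range (r + 1), ((r.choose i : R) * (-ζ) ^ i) • ∑ j ∈ range i, X ^ j

theorem one_sub_X_mul_negBinomialSurvivalNumerator (ζ : R) (r : ℕ) :
    (1 - X) * negBinomialSurvivalNumerator ζ r = C ((1 - ζ) ^ r) - (1 - C ζ * X) ^ r := by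
  have hone := sum_choose_mul_neg_pow_smul_pow ζ (1 : R[X]) r
  simp only [one_pow] at hone
  rw [negBinomialSurvivalNumerator, mul_sum]
  simp only [mul_smul_comm, mul_neg_geom_sum, smul_sub, sum_sub_distrib, hone,
    sum_choose_mul_neg_pow_smul_pow]
  rw [smul_eq_C_mul, smul_eq_C_mul, mul_one, ← C_1, ← C_sub, ← C_pow, C_1]

theorem aeval_negBinomialSurvivalNumerator {A : Type*} [Ring A] [Algebra R A] (x : A) (ζ : R)
    (r : ℕ) : aeval x (negBinomialSurvivalNumerator ζ r) =
      ∑ i ∈ range (r + 1), ((r.choose i : R) * (-ζ) ^ i) • ∑ j ∈ range i, x ^ j := by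
  simp [negBinomialSurvivalNumerator]

end Polynomial

section NegativeBinomial

open PowerSeries

theorem hasSum_negBinomial (d : ℕ) {ζ : ℝ} (hζ : ‖ζ‖ < 1) :
    HasSum (fun s => ((s + d).choose d : ℝ) * ζ ^ s * (1 - ζ) ^ (d + 1)) 1 := by
  have hζ1 : 1 - ζ ≠ 0 := sub_ne_zero.2 fun h => by simp [← h] at hζ
  simpa [one_div, inv_mul_cancel₀ (pow_ne_zero _ hζ1)] using
    (hasSum_choose_mul_geometric_of_norm_lt_one d hζ).mul_right ((1 - ζ) ^ (d + 1))

theorem mk_tsum_negBinomial_tail (d : ℕ) {ζ : ℝ} (hζ : ‖ζ‖ < 1) :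
    PowerSeries.mk (fun k =>
        ∑' m, ((k + 1 + m + d).choose d : ℝ) * ζ ^ (k + 1 + m) * (1 - ζ) ^ (d + 1)) =
      (↑(-negBinomialSurvivalNumerator ζ (d + 1)) : ℝ⟦X⟧) *
        PowerSeries.mk (fun s => ((s + d).choose d : ℝ) * ζ ^ s) := by
  set G := PowerSeries.mk (fun s => ((s + d).choose d : ℝ) * ζ ^ s)
  have hG : G * (1 - C ζ * X) ^ (d + 1) = 1 := mk_choose_mul_pow_mul_one_sub_C_mul_X_pow ζ d
  have hS : (1 - X) * (negBinomialSurvivalNumerator ζ (d + 1) : ℝ⟦X⟧) =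
      C ((1 - ζ) ^ (d + 1)) - (1 - C ζ * X) ^ (d + 1) := by
    simpa using congrArg (Polynomial.coeToPowerSeries.ringHom (R := ℝ))
      (one_sub_X_mul_negBinomialSurvivalNumerator ζ (d + 1))
  have hp : PowerSeries.mk (fun s => ((s + d).choose d : ℝ) * ζ ^ s * (1 - ζ) ^ (d + 1)) =
      C ((1 - ζ) ^ (d + 1)) * G := by
    ext s
    rw [coeff_C_mul, coeff_mk, coeff_mk]
    ring
  have hunit : IsUnit (1 - X : ℝ⟦X⟧) := isUnit_iff_constantCoeff.2 (by simp)
  refine hunit.mul_left_cancel ?_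
  rw [one_sub_X_mul_mk_tsum_tail (hasSum_negBinomial d hζ), hp, Polynomial.coe_neg, neg_mul,
    mul_neg, ← mul_assoc, hS, map_one]
  linear_combination -hG

end NegativeBinomial

open PowerSeries in
theorem IsStochastic.hasSum_choose_mul_pow_smul_pow {n : Type*} [Fintype n] [DecidableEq n]
    {M : Matrix n n ℝ} (hM : IsStochastic M) (d : ℕ) {ζ : ℝ} (hζ : ‖ζ‖ < 1) :
    HasSum (fun s => (((s + d).choose d : ℝ) * ζ ^ s) • M ^ s) ((1 - ζ • M)⁻¹ ^ (d + 1)) := by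
  obtain ⟨G, hG⟩ := hM.summable_smul_pow (summable_choose_mul_geometric_of_norm_lt_one d hζ)
  have h := hG.aeval_mul ((1 - Polynomial.C ζ * Polynomial.X) ^ (d + 1))
  simp only [Polynomial.coe_pow, Polynomial.coe_sub, Polynomial.coe_one, Polynomial.coe_mul,
    Polynomial.coe_C, Polynomial.coe_X, mul_comm _ (PowerSeries.mk _),
    mk_choose_mul_pow_mul_one_sub_C_mul_X_pow] at h
  have hinv : (1 - ζ • M) ^ (d + 1) * G = 1 := by
    have haeval : Polynomial.aeval M ((1 - Polynomial.C ζ * Polynomial.X) ^ (d + 1)) =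
        (1 - ζ • M) ^ (d + 1) := by
      simp only [map_pow, map_sub, map_one, map_mul, Polynomial.aeval_C, Polynomial.aeval_X,
        ← Algebra.smul_def]
    rw [← haeval]
    refine h.unique ?_
    have h1 := hasSum_single (f := fun k => coeff k (1 : ℝ⟦X⟧) • M ^ k) 0 fun k hk => by
      rw [coeff_one, if_neg hk, zero_smul]
    rw [coeff_zero_one, one_smul, pow_zero] at h1
    exact h1
  rwa [Matrix.inv_pow', Matrix.inv_eq_right_inv hinv]

theorem negBinomial_sgf_of_stochastic_matrix_general
    {n : Type*} [Fintype n] [DecidableEq n]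
    (M : Matrix n n ℝ) (hM : IsStochastic M)
    (ζ : ℝ) (hζ : ζ ∈ Set.Ioo (0 : ℝ) 1) (r : ℕ) (hr : 1 ≤ r) :
    HasSum
      (fun k : ℕ =>
        (∑' m : ℕ, ((k + 1 + m + r - 1).choose (r - 1) : ℝ) * ζ ^ (k + 1 + m) *
          (1 - ζ) ^ r) • M ^ k)
      (-(∑ i ∈ Finset.range (r + 1),
          ((r.choose i : ℝ) * (-ζ) ^ i) • ∑ j ∈ Finset.range i, M ^ j) *
        ((1 - ζ • M)⁻¹) ^ r) := by
  obtain ⟨d, rfl⟩ : ∃ d, r = d + 1 := ⟨r - 1, by omega⟩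
  have hζ' : ‖ζ‖ < 1 := by rw [Real.norm_of_nonneg hζ.1.le]; exact hζ.2
  have h := (hM.hasSum_choose_mul_pow_smul_pow d hζ').aeval_mul
    (-negBinomialSurvivalNumerator ζ (d + 1))
  rw [← mk_tsum_negBinomial_tail d hζ', map_neg, aeval_negBinomialSurvivalNumerator] at h
  simpa only [Nat.add_sub_cancel, Nat.add_succ_sub_one, PowerSeries.coeff_mk] using h

/-- Proposition (survival generating function of a negative binomial stopping number
evaluated at a stochastic matrix): for a stochastic matrix `M`, `ζ ∈ (0,1)` and an
integer `r ≥ 1`, with `P[N>k] = ∑_{m>k} C(m+r−1, r−1) ζᵐ (1−ζ)ʳ`, the series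
`∑ₖ P[N>k] Mᵏ` converges entrywise to
`−(∑_{i=0}^{r} C(r,i) (−ζ)ⁱ ∑_{j=0}^{i−1} Mʲ)·(I − ζM)^{−r}`. -/
theorem negBinomial_sgf_of_stochastic_matrix
    {n : Type*} [Fintype n] [DecidableEq n] [Nonempty n]
    (M : Matrix n n ℝ) (hM : IsStochastic M)
    (ζ : ℝ) (hζ : ζ ∈ Set.Ioo (0 : ℝ) 1) (r : ℕ) (hr : 1 ≤ r) :
    HasSum
      (fun k : ℕ =>
        (∑' m : ℕ, ((k + 1 + m + r - 1).choose (r - 1) : ℝ) * ζ ^ (k + 1 + m) *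
          (1 - ζ) ^ r) • M ^ k)
      (-(∑ i ∈ Finset.range (r + 1),
          ((r.choose i : ℝ) * (-ζ) ^ i) • ∑ j ∈ Finset.range i, M ^ j) *
        ((1 - ζ • M)⁻¹) ^ r) :=
  negBinomial_sgf_of_stochastic_matrix_general M hM ζ hζ r hr
end
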